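/- arXiv:2403.13718 — 4 statements merged into one kernel-verified Lean document; each statement's English description precedes it below -/
import Mathlib

section
/- Let X, X₁, …, X_{n-1} be subsets of [n], each of cardinality n−1, and suppose not all of the Xᵢ are equal. Then the family of sets (X ∩ Xᵢ)_{i=1}^{n-1} has a system of distinct representatives: one can choose xᵢ ∈ X ∩ Xᵢ for each i ∈ [n−1] with xᵢ ≠ x_j whenever i ≠ j. -/
/-! By Hall's theorem it suffices to check that any `k` of the sets `X ∩ Xᵢ` cover at least `k`
elements. Each `X ∩ Xᵢ` has at least `n - 2` elements, which settles every proper subfamily.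
For the whole family, two distinct `Xᵢ ≠ Xⱼ` of size `n - 1` already cover `[n]`, so the
union of all the `X ∩ Xᵢ` is `X` itself, of size `n - 1`. -/

open Finset

namespace Finset

variable {α : Type*} [DecidableEq α]

theorem card_add_card_sub_card_le_card_inter [Fintype α] (s t : Finset α) :
    #s + #t - Fintype.card α ≤ #(s ∩ t) := by
  have := card_union_add_card_inter s t
  have := card_le_univ (s ∪ t)
  omega

theorem union_eq_univ_of_card_eq_pred [Fintype α] {s t : Finset α}
    (hs : #s = Fintype.card α - 1) (ht : #t = Fintype.card α - 1) (hst : s ≠ t) :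
    s ∪ t = univ := by
  have hts : ¬ t ⊆ s := fun h => hst (eq_of_subset_of_card_le h (by omega)).symm
  have hlt : #s < #(s ∪ t) := card_lt_card (left_lt_sup.2 hts)
  exact eq_univ_of_card _ (le_antisymm (card_le_univ _) (by omega))

theorem exists_injective_of_card_pred_le {ι : Type*} [Fintype ι] (t : ι → Finset α)
    (ht : ∀ i, Fintype.card ι - 1 ≤ #(t i)) (hunion : Fintype.card ι ≤ #(univ.biUnion t)) :
    ∃ f : ι → α, Function.Injective f ∧ ∀ i, f i ∈ t i := by
  rw [← all_card_le_biUnion_card_iff_exists_injective]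
  intro s
  rcases s.eq_empty_or_nonempty with rfl | ⟨i, hi⟩
  · simp
  by_cases hs : s = univ
  · simpa [hs] using hunion
  have hlt : #s < Fintype.card ι := (card_lt_iff_ne_univ s).2 hs
  calc #s ≤ Fintype.card ι - 1 := by omega
    _ ≤ #(t i) := ht i
    _ ≤ #(s.biUnion t) := card_le_card (subset_biUnion_of_mem t hi)

end Finset

/-- if `X, X₁, …, X_{n-1}` are subsets of `[n]` of size `n-1`,
not all of the `Xᵢ` equal, then the sets `X ∩ Xᵢ` admit a system of distinct
representatives. -/
theorem stmt_3 (n : ℕ) (X : Finset (Fin n)) (hX : X.card = n - 1)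
    (Y : Fin (n - 1) → Finset (Fin n)) (hY : ∀ i, (Y i).card = n - 1)
    (hne : ∃ i j, Y i ≠ Y j) :
    ∃ f : Fin (n - 1) → Fin n, Function.Injective f ∧ ∀ i, f i ∈ X ∩ Y i := by
  obtain ⟨i, j, hij⟩ := hne
  have hcover : Y i ∪ Y j = univ :=
    union_eq_univ_of_card_eq_pred (by simpa using hY i) (by simpa using hY j) hij
  have hX_sub : X ⊆ univ.biUnion fun k => X ∩ Y k := by
    intro x hx
    rcases mem_union.1 (hcover ▸ mem_univ x) with h | h
    · exact mem_biUnion.2 ⟨i, mem_univ i, mem_inter.2 ⟨hx, h⟩⟩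
    · exact mem_biUnion.2 ⟨j, mem_univ j, mem_inter.2 ⟨hx, h⟩⟩
  apply exists_injective_of_card_pred_le
  · intro k
    have := card_add_card_sub_card_le_card_inter X (Y k)
    simp only [Fintype.card_fin, hX, hY k] at this ⊢
    omega
  · simpa [hX] using card_le_card hX_sub
end

section
/- Let k ≤ n and let Z = {X₁,…,X_k, Y₁,…,Y_k} be a multiset of 2k subsets of [n], each of size n−1. Suppose (i) there do not exist distinct subsets X, Y ⊂ [n] of size n−1 and a set J ⊂ [k] with |J| ≥ n−1 such that {X_j, Y_j} = {X, Y} for all j ∈ J, and (ii) no subset W ⊂ [n] of size n−1 occurs with multiplicity ≥ n in Z. Then the sets Cᵢ = Xᵢ ∩ Yᵢ (i ∈ [k]) admit a system of distinct representatives. -/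
/-!
Use Hall's theorem. Each `Cᵢ = Xᵢ ∩ Yᵢ` misses at most two points, so a family `s` of indices
violating Hall's condition has a union `U` of size `n - 2` or `n - 1`, and `|s| > |U|`.
If two points `w₁ ≠ w₂` lie outside `U`, every pair `{Xⱼ, Yⱼ}`, `j ∈ s`, must be
`{[n] \ {w₁}, [n] \ {w₂}}`, and `|s| ≥ n - 1` contradicts (i). If only one point `w` lies outside
`U`, then `Xⱼ` or `Yⱼ` equals `[n] \ {w}` for each of the `|s| ≥ n` indices `j ∈ s`,
contradicting (ii).
-/

open Finset

section

variable {α : Type*} [Fintype α] [DecidableEq α]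

lemma Finset.eq_compl_singleton_of_card_eq_pred {A : Finset α} (hA : #A = Fintype.card α - 1) {w : α}
    (hw : w ∉ A) : A = {w}ᶜ := by
  refine eq_of_subset_of_card_le (fun x hx => ?_) ?_
  · rw [mem_compl, mem_singleton]
    rintro rfl
    exact hw hx
  · rw [card_compl, card_singleton, hA]

lemma Finset.card_sub_two_le_card_inter {A B : Finset α} (hA : #A = Fintype.card α - 1)
    (hB : #B = Fintype.card α - 1) : Fintype.card α - 2 ≤ #(A ∩ B) := by
  have h := card_union_add_card_inter A B
  have hAB := card_le_univ (A ∪ B)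
  omega

lemma Finset.eq_compl_singleton_or_of_notMem_inter {A B : Finset α} (hA : #A = Fintype.card α - 1)
    (hB : #B = Fintype.card α - 1) {w : α} (hw : w ∉ A ∩ B) : A = {w}ᶜ ∨ B = {w}ᶜ := by
  rw [mem_inter, not_and_or] at hw
  exact hw.imp (eq_compl_singleton_of_card_eq_pred hA) (eq_compl_singleton_of_card_eq_pred hB)

lemma Finset.pair_eq_compl_singletons_of_notMem_inter {A B : Finset α} (hA : #A = Fintype.card α - 1)
    (hB : #B = Fintype.card α - 1) {w₁ w₂ : α} (hne : w₁ ≠ w₂) (hw₁ : w₁ ∉ A ∩ B) (hw₂ : w₂ ∉ A ∩ B) :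
    ({A, B} : Finset (Finset α)) = {{w₁}ᶜ, {w₂}ᶜ} := by
  rcases eq_compl_singleton_or_of_notMem_inter hA hB hw₁ with rfl | rfl
  · obtain rfl : B = {w₂}ᶜ := by
      simpa [hne] using eq_compl_singleton_or_of_notMem_inter hA hB hw₂
    rfl
  · obtain rfl : A = {w₂}ᶜ := by
      simpa [hne] using eq_compl_singleton_or_of_notMem_inter hA hB hw₂
    exact pair_comm _ _

variable {ι : Type*} [Fintype ι] {X Y : ι → Finset α}

lemma card_filter_notMem_inter_le (hX : ∀ i, #(X i) = Fintype.card α - 1)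
    (hY : ∀ i, #(Y i) = Fintype.card α - 1) (w : α) :
    #{j | w ∉ X j ∩ Y j} ≤ #{j | X j = {w}ᶜ} + #{j | Y j = {w}ᶜ} := by
  classical
  calc #{j | w ∉ X j ∩ Y j}
      ≤ #(({j | X j = {w}ᶜ} : Finset ι) ∪ ({j | Y j = {w}ᶜ} : Finset ι)) := by
        rw [← filter_or]
        exact card_le_card <| monotone_filter_right _
          fun j _ => eq_compl_singleton_or_of_notMem_inter (hX j) (hY j)
    _ ≤ #{j | X j = {w}ᶜ} + #{j | Y j = {w}ᶜ} := card_union_le _ _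

theorem exists_pair_or_frequent_of_card_biUnion_inter_lt (hk : Fintype.card ι ≤ Fintype.card α)
    (hX : ∀ i, #(X i) = Fintype.card α - 1) (hY : ∀ i, #(Y i) = Fintype.card α - 1) {s : Finset ι}
    (hs : #(s.biUnion fun i => X i ∩ Y i) < #s) :
    (∃ w₁ w₂ : α, w₁ ≠ w₂ ∧ Fintype.card α - 1 ≤ #s ∧
      ∀ j ∈ s, ({X j, Y j} : Finset (Finset α)) = {{w₁}ᶜ, {w₂}ᶜ}) ∨
    ∃ w : α, Fintype.card α ≤ #{j | X j = {w}ᶜ} + #{j | Y j = {w}ᶜ} := by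
  set U := s.biUnion fun i => X i ∩ Y i
  obtain ⟨i, hi⟩ : s.Nonempty := card_pos.mp (by omega)
  have hU : Fintype.card α - 2 ≤ #U := (card_sub_two_le_card_inter (hX i) (hY i)).trans
    (card_le_card (subset_biUnion_of_mem (fun i => X i ∩ Y i) hi))
  have hsα : #s ≤ Fintype.card α := (card_le_univ s).trans hk
  have hUc : #Uᶜ = Fintype.card α - #U := card_compl U
  have hmiss : ∀ w ∈ Uᶜ, ∀ j ∈ s, w ∉ X j ∩ Y j := fun w hw j hj hj' =>
    mem_compl.mp hw (mem_biUnion.mpr ⟨j, hj, hj'⟩)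
  rcases Nat.lt_or_ge 1 #Uᶜ with h | h
  · obtain ⟨w₁, hw₁, w₂, hw₂, hne⟩ := one_lt_card.mp h
    exact .inl ⟨w₁, w₂, hne, by omega, fun j hj =>
      pair_eq_compl_singletons_of_notMem_inter (hX j) (hY j) hne (hmiss w₁ hw₁ j hj)
        (hmiss w₂ hw₂ j hj)⟩
  · obtain ⟨w, hw⟩ : Uᶜ.Nonempty := card_pos.mp (by omega)
    refine .inr ⟨w, ?_⟩
    calc Fintype.card α ≤ #s := by omega
      _ ≤ #{j | w ∉ X j ∩ Y j} := card_le_card fun j hj => by simpa using hmiss w hw j hj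
      _ ≤ _ := card_filter_notMem_inter_le hX hY w

end

/-- Hall-type result for the multiset `Z = {X₁,…,X_k,Y₁,…,Y_k}`
of subsets of `[n]` of size `n-1`: under conditions (i) and (ii) the sets
`Xᵢ ∩ Yᵢ` admit a system of distinct representatives. -/
theorem stmt_4 (n k : ℕ) (hk : k ≤ n)
    (X Y : Fin k → Finset (Fin n))
    (hX : ∀ i, (X i).card = n - 1) (hY : ∀ i, (Y i).card = n - 1)
    (h1 : ¬ ∃ (A B : Finset (Fin n)) (J : Finset (Fin k)),
        A.card = n - 1 ∧ B.card = n - 1 ∧ A ≠ B ∧ n - 1 ≤ J.card ∧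
        ∀ j ∈ J, ({X j, Y j} : Finset (Finset (Fin n))) = {A, B})
    (h2 : ∀ W : Finset (Fin n), W.card = n - 1 →
        (Finset.univ.filter (fun j => X j = W)).card
          + (Finset.univ.filter (fun j => Y j = W)).card < n) :
    ∃ f : Fin k → Fin n, Function.Injective f ∧ ∀ i, f i ∈ X i ∩ Y i := by
  have hcompl (w : Fin n) : #({w}ᶜ : Finset (Fin n)) = n - 1 := by simp [card_compl]
  rw [← all_card_le_biUnion_card_iff_exists_injective]
  intro s
  by_contra! hs
  rcases exists_pair_or_frequent_of_card_biUnion_inter_lt (by simpa using hk)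
    (by simpa using hX) (by simpa using hY) hs with ⟨w₁, w₂, hne, hJ, hpair⟩ | ⟨w, hw⟩
  · refine h1 ⟨{w₁}ᶜ, {w₂}ᶜ, s, hcompl w₁, hcompl w₂, ?_, by simpa using hJ, hpair⟩
    exact fun h => hne (singleton_injective (compl_injective h))
  · exact (h2 {w}ᶜ (hcompl w)).not_ge (by simpa using hw)
end

section
/- With the setup of the previous statement, the set of z ∈ ℂ^𝒫 such that all lifted collections {γ̃_{c} : c ∈ 𝒞} are degenerate in the sense that all lifted vectors lie in a common hyperplane not containing q forms a linear subspace of dimension exactly n−1 of ker of the lifting matrix; hence a non-degenerate lifting exists if and only if dim ker ℳ ≥ n, equivalently all (|𝒫|−n+1)-minors of ℳ vanish. -/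
/-!
A hyperplane avoiding `q` is the kernel of a functional `f` with `f q ≠ 0`; since
`γ̃_p = γ_p + z_p q`, normalising `f q = -1` shows that `z` is degenerate exactly when
`z_p = g γ_p` for some functional `g`. So the degenerate liftings are the image of the dual
space under `g ↦ (g γ_p)_p`, of dimension `dim span {γ_p} = n - 1`. Up to sign, the row of `ℳ z`
at a circuit `c` is the Laplace expansion along the last row of `det [γ̃_{c_1} ⋯ γ̃_{c_n}]`,
which vanishes when all `γ̃_p` lie in one hyperplane. The rest is rank–nullity and the
description of the rank by non-vanishing minors.
-/

/-- The lifted vector `γ̃_p = (y_p, 1, z_p) ∈ ℂⁿ` (for `z = 0` this is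
`γ_p = (y_p, 1, 0)`, a vector of the hyperplane `x_n = 0`). -/
def gLift (n : ℕ) {P : Type} (y : P → Fin (n - 2) → ℂ) (z : P → ℂ) (p : P) :
    Fin n → ℂ := fun j =>
  if h : (j : ℕ) < n - 2 then y p ⟨j, h⟩
  else if (j : ℕ) = n - 2 then 1 else z p

/-- The order-preserving enumeration of `{0,…,n-1} \ {i}`. -/
def embAux (n : ℕ) (i : Fin n) (j : Fin (n - 1)) : Fin n :=
  if (j : ℕ) < (i : ℕ) then
    ⟨j.val, by have := j.isLt; have := i.isLt; omega⟩
  else ⟨j.val + 1, by have := j.isLt; have := i.isLt; omega⟩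

/-- The `(n-1)`-minor: determinant of the `(n-1)×(n-1)` matrix whose columns
are the vectors `(y_{c_j}, 1)` for `j ≠ i`. -/
noncomputable def minorAux (n : ℕ) {P : Type} (y : P → Fin (n - 2) → ℂ)
    (c : Fin n → P) (i : Fin n) : ℂ :=
  Matrix.det (Matrix.of fun (r j : Fin (n - 1)) =>
    if h : (r : ℕ) < n - 2 then y (c (embAux n i j)) ⟨r, h⟩ else 1)

/-- The lifting matrix `ℳ`: rows indexed by the circuits `c ∈ 𝒞`, columns by
the points; the row of `c` has entry `(-1)^{i-1}` times the minor omitting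
`cᵢ` in column `cᵢ`, and zeros elsewhere. -/
noncomputable def liftMat (n : ℕ) (P : Type) [DecidableEq P]
    (y : P → Fin (n - 2) → ℂ) (C : Finset (Fin n → P)) :
    Matrix {c // c ∈ C} P ℂ := fun c p =>
  ∑ i : Fin n, if c.1 i = p then (-1 : ℂ) ^ (i : ℕ) * minorAux n y c.1 i else 0

/-- The set of degenerate liftings: those `z` for which all lifted vectors lie
in a common hyperplane not containing `q = (0,…,0,1)`. -/
def Degenerate (n : ℕ) (P : Type) (y : P → Fin (n - 2) → ℂ) : Set (P → ℂ) :=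
  {z | ∃ H : Submodule ℂ (Fin n → ℂ), Module.finrank ℂ H = n - 1 ∧
    (∀ p, gLift n y z p ∈ H) ∧
    (fun j : Fin n => if (j : ℕ) = n - 1 then (1 : ℂ) else 0) ∉ H}

open Module Matrix

section LinearAlgebra

variable {K V ι : Type*} [Field K] [AddCommGroup V] [Module K V]

theorem exists_fin_linearIndependent_comp [FiniteDimensional K V] (v : ι → V) {k : ℕ}
    (hk : k ≤ finrank K (Submodule.span K (Set.range v))) :
    ∃ g : Fin k → ι, LinearIndependent K (v ∘ g) := by
  obtain ⟨κ, a, -, hspan, hli⟩ := exists_linearIndependent' K v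
  have := hli.finite
  have := Fintype.ofFinite κ
  rw [← hspan, finrank_span_eq_card hli] at hk
  obtain ⟨e⟩ : Nonempty (Fin k ↪ κ) :=
    Function.Embedding.nonempty_of_card_le (by simpa using hk)
  exact ⟨a ∘ e, hli.comp e e.injective⟩

theorem Matrix.rank_lt_iff_forall_det_submatrix_eq_zero {m n : Type*} [Fintype m] [Fintype n]
    (M : Matrix m n K) (k : ℕ) :
    M.rank < k ↔ ∀ (f : Fin k → m) (g : Fin k → n), (M.submatrix f g).det = 0 := by
  constructor
  · intro hlt f g
    by_contra hdet
    have h := (M.submatrix f g).rank_of_det_ne_zero hdet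
    have := M.rank_submatrix_le f g
    rw [h, Fintype.card_fin] at this
    omega
  · intro hdet
    by_contra! hle
    obtain ⟨f, hf⟩ := exists_fin_linearIndependent_comp (k := k) M.row
      (by rwa [← rank_eq_finrank_span_row])
    have hrank : (M.submatrix f id).rank = k := by
      simpa using LinearIndependent.rank_matrix (M := M.submatrix f id) hf
    obtain ⟨g, hg⟩ := exists_fin_linearIndependent_comp (k := k) (M.submatrix f id).col
      (by rw [← rank_eq_finrank_span_cols, hrank])
    have hunit : IsUnit (M.submatrix f g) := linearIndependent_cols_iff_isUnit.mp hg
    exact (isUnit_iff_isUnit_det _).mp hunit |>.ne_zero (hdet f g)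

theorem Submodule.exists_mem_notMem_iff_finrank_lt {W U : Submodule K V}
    [FiniteDimensional K U] (h : W ≤ U) : (∃ z ∈ U, z ∉ W) ↔ finrank K W < finrank K U := by
  rw [← (and_iff_right h : _ ↔ ∃ z ∈ U, z ∉ W), ← SetLike.lt_iff_le_and_exists]
  refine ⟨finrank_lt_finrank_of_lt, fun hlt => lt_of_le_of_ne h ?_⟩
  rintro rfl
  exact hlt.false

theorem exists_hyperplane_notMem_iff_exists_dual [FiniteDimensional K V] (q : V) (v : ι → V) :
    (∃ H : Submodule K V, finrank K H = finrank K V - 1 ∧ (∀ i, v i ∈ H) ∧ q ∉ H) ↔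
      ∃ f : Module.Dual K V, f q ≠ 0 ∧ ∀ i, f (v i) = 0 := by
  constructor
  · rintro ⟨H, -, hv, hq⟩
    obtain ⟨f, hfq, hf⟩ := Submodule.exists_dual_map_eq_bot_of_notMem hq inferInstance
    exact ⟨f, hfq, fun i => by simpa [hf] using Submodule.mem_map_of_mem (f := f) (hv i)⟩
  · rintro ⟨f, hfq, hf⟩
    have hf0 : f ≠ 0 := fun h => hfq (by simp [h])
    refine ⟨LinearMap.ker f, ?_, hf, hfq⟩
    have := Module.Dual.finrank_ker_add_one_of_ne_zero hf0
    omega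

theorem Matrix.det_eq_zero_of_dual_apply_col_eq_zero {n : Type*} [Fintype n] [DecidableEq n]
    (N : Matrix n n K) {f : Module.Dual K (n → K)} (hf : f ≠ 0) (h : ∀ i, f (N.col i) = 0) :
    N.det = 0 := by
  by_contra hdet
  have hsurj : Function.Surjective N.mulVec :=
    mulVec_surjective_iff_isUnit.mpr <| (isUnit_iff_isUnit_det N).mpr <|
      isUnit_iff_ne_zero.mpr hdet
  refine hf (LinearMap.ext fun x => ?_)
  obtain ⟨a, rfl⟩ := hsurj x
  simpa [mulVec_eq_sum] using Finset.sum_eq_zero fun i _ => by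
    rw [show Nᵀ i = N.col i from rfl, h i, mul_zero]

def dualEvalFamily (v : ι → V) : Module.Dual K V →ₗ[K] ι → K :=
  LinearMap.pi fun i => Module.Dual.eval K V (v i)

@[simp]
theorem dualEvalFamily_apply (v : ι → V) (f : Module.Dual K V) (i : ι) :
    dualEvalFamily v f i = f (v i) := rfl

theorem ker_dualEvalFamily (v : ι → V) :
    LinearMap.ker (dualEvalFamily (K := K) v) =
      (Submodule.span K (Set.range v)).dualAnnihilator := by
  ext f
  simp only [LinearMap.mem_ker, Submodule.mem_dualAnnihilator, funext_iff, dualEvalFamily_apply,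
    Pi.zero_apply]
  show (∀ i, f (v i) = 0) ↔ Submodule.span K (Set.range v) ≤ LinearMap.ker f
  rw [Submodule.span_le, Set.range_subset_iff]
  rfl

theorem finrank_range_dualEvalFamily [FiniteDimensional K V] (v : ι → V) :
    finrank K (LinearMap.range (dualEvalFamily (K := K) v)) =
      finrank K (Submodule.span K (Set.range v)) := by
  have h1 := LinearMap.finrank_range_add_finrank_ker (dualEvalFamily (K := K) v)
  have h2 := Subspace.finrank_add_finrank_dualAnnihilator_eq (Submodule.span K (Set.range v))
  rw [ker_dualEvalFamily, Subspace.dual_finrank_eq] at h1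
  omega

theorem exists_dual_add_smul_eq_zero_iff_mem_range {q : V} {v : ι → V} {ℓ : Module.Dual K V}
    (hq : ℓ q = 1) (hv : ∀ i, ℓ (v i) = 0) (z : ι → K) :
    (∃ f : Module.Dual K V, f q ≠ 0 ∧ ∀ i, f (v i + z i • q) = 0) ↔
      z ∈ LinearMap.range (dualEvalFamily v) := by
  constructor
  · rintro ⟨f, hfq, hf⟩
    refine ⟨-(f q)⁻¹ • f, funext fun i => ?_⟩
    have := hf i
    simp only [map_add, map_smul, smul_eq_mul] at this
    simp only [dualEvalFamily_apply, LinearMap.smul_apply, smul_eq_mul]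
    rw [neg_mul, neg_eq_iff_eq_neg, inv_mul_eq_iff_eq_mul₀ hfq]
    linear_combination this
  · rintro ⟨g, rfl⟩
    refine ⟨g - (1 + g q) • ℓ, by simp [hq], fun i => ?_⟩
    simp [hq, hv]
    ring

end LinearAlgebra

section Lifting

variable {P : Type}

theorem embAux_eq_succAbove (m : ℕ) (i : Fin (m + 1)) (j : Fin m) :
    embAux (m + 1) i j = i.succAbove j := by
  unfold embAux
  split_ifs with h
  · rw [Fin.succAbove_of_castSucc_lt _ _ (by simpa [Fin.lt_def] using h)]; rfl
  · rw [Fin.succAbove_of_le_castSucc _ _ (by simpa [Fin.le_def] using h)]; rfl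

theorem gLift_last (k : ℕ) (y : P → Fin k → ℂ) (z : P → ℂ) (p : P) :
    gLift (k + 2) y z p (Fin.last (k + 1)) = z p := by
  simp [gLift]

theorem det_gLift_eq_sum_minorAux (k : ℕ) (y : P → Fin k → ℂ) (z : P → ℂ)
    (c : Fin (k + 2) → P) :
    (Matrix.of fun r i : Fin (k + 2) => gLift (k + 2) y z (c i) r).det =
      (-1) ^ (k + 1) * ∑ i : Fin (k + 2), (-1) ^ (i : ℕ) * minorAux (k + 2) y c i * z (c i) := by
  rw [det_succ_row _ (Fin.last (k + 1)), Finset.mul_sum]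
  refine Finset.sum_congr rfl fun i _ => ?_
  have hminor : ((Matrix.of fun r i : Fin (k + 2) => gLift (k + 2) y z (c i) r).submatrix
      (Fin.last (k + 1)).succAbove i.succAbove).det = minorAux (k + 2) y c i := by
    unfold minorAux
    congr 1
    ext r j
    have := r.isLt
    simp only [submatrix_apply, of_apply, gLift, embAux_eq_succAbove, Fin.succAbove_last,
      Fin.val_castSucc]
    split_ifs <;> first | rfl | omega
  rw [hminor, of_apply, gLift_last, Fin.val_last, pow_add]
  ring

theorem liftMat_mulVec_apply [Fintype P] [DecidableEq P] (n : ℕ) (y : P → Fin (n - 2) → ℂ)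
    (C : Finset (Fin n → P)) (z : P → ℂ) (c : {c // c ∈ C}) :
    (liftMat n P y C *ᵥ z) c = ∑ i : Fin n, (-1) ^ (i : ℕ) * minorAux n y c.1 i * z (c.1 i) := by
  simp only [mulVec, dotProduct, liftMat, Finset.sum_mul, ite_mul, zero_mul]
  rw [Finset.sum_comm]
  simp

theorem gLift_eq_add_smul {n : ℕ} (hn : 2 ≤ n) (y : P → Fin (n - 2) → ℂ) (z : P → ℂ) (p : P) :
    gLift n y z p =
      gLift n y 0 p + z p • fun j : Fin n => if (j : ℕ) = n - 1 then (1 : ℂ) else 0 := by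
  ext j
  have := j.isLt
  simp only [gLift, Pi.add_apply, Pi.smul_apply, Pi.zero_apply, smul_eq_mul]
  split_ifs <;> first | omega | simp

theorem mem_degenerate_iff_exists_dual {n : ℕ} (y : P → Fin (n - 2) → ℂ) (z : P → ℂ) :
    z ∈ Degenerate n P y ↔ ∃ f : Module.Dual ℂ (Fin n → ℂ),
      f (fun j => if (j : ℕ) = n - 1 then 1 else 0) ≠ 0 ∧ ∀ p, f (gLift n y z p) = 0 := by
  have := exists_hyperplane_notMem_iff_exists_dual (K := ℂ)
    (fun j : Fin n => if (j : ℕ) = n - 1 then (1 : ℂ) else 0) (gLift n y z)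
  rwa [finrank_fin_fun ℂ] at this

theorem degenerate_eq_range {n : ℕ} (hn : 2 ≤ n) (y : P → Fin (n - 2) → ℂ) :
    Degenerate n P y = LinearMap.range (dualEvalFamily (K := ℂ) (gLift n y 0)) := by
  ext z
  rw [SetLike.mem_coe, mem_degenerate_iff_exists_dual]
  simp_rw [gLift_eq_add_smul hn y z]
  refine exists_dual_add_smul_eq_zero_iff_mem_range (ℓ := LinearMap.proj ⟨n - 1, by omega⟩)
    (by simp) (fun p => ?_) z
  simp only [LinearMap.proj_apply, gLift]
  rw [dif_neg (by omega), if_neg (by omega), Pi.zero_apply]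

theorem degenerate_subset_ker_liftMat [Fintype P] [DecidableEq P] {n : ℕ} (hn : 2 ≤ n)
    (y : P → Fin (n - 2) → ℂ) (C : Finset (Fin n → P)) :
    Degenerate n P y ⊆ LinearMap.ker (liftMat n P y C).mulVecLin := by
  intro z hz
  obtain ⟨f, hfq, hf⟩ := (mem_degenerate_iff_exists_dual y z).mp hz
  obtain ⟨k, rfl⟩ : ∃ k, n = k + 2 := ⟨n - 2, by omega⟩
  ext c
  have hdet := det_gLift_eq_sum_minorAux k y z c.1
  rw [det_eq_zero_of_dual_apply_col_eq_zero (of fun r i => gLift (k + 2) y z (c.1 i) r)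
    (fun h => hfq (by simp [h])) (fun i => hf (c.1 i))] at hdet
  rw [Matrix.mulVecLin_apply, liftMat_mulVec_apply, Pi.zero_apply]
  exact (mul_eq_zero.mp hdet.symm).resolve_left (pow_ne_zero _ (by norm_num))

theorem finrank_range_dualEvalFamily_gLift {n : ℕ} (hn : 2 ≤ n) (y : P → Fin (n - 2) → ℂ)
    (hspan : Submodule.span ℂ (Set.range (gLift n y (0 : P → ℂ)))
      = LinearMap.ker (LinearMap.proj (R := ℂ) (φ := fun _ : Fin n => ℂ) ⟨n - 1, by omega⟩)) :
    finrank ℂ (LinearMap.range (dualEvalFamily (K := ℂ) (gLift n y 0))) = n - 1 := by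
  have hproj : LinearMap.proj (R := ℂ) (φ := fun _ : Fin n => ℂ) ⟨n - 1, by omega⟩ ≠ 0 := by
    intro h
    simpa using LinearMap.congr_fun h (Pi.single ⟨n - 1, by omega⟩ 1)
  have := Module.Dual.finrank_ker_add_one_of_ne_zero hproj
  rw [finrank_fin_fun ℂ] at this
  rw [finrank_range_dualEvalFamily, hspan]
  omega

end Lifting

/-- the degenerate liftings form a linear subspace of dimension
exactly `n-1` of `ker ℳ`; hence a non-degenerate lifting exists iff
`dim ker ℳ ≥ n`, equivalently iff all `(|𝒫|-n+1)`-minors of `ℳ` vanish. -/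
theorem stmt_16 (n : ℕ) (hn : 2 ≤ n) (P : Type) [Fintype P] [DecidableEq P]
    (hcard : n ≤ Fintype.card P)
    (y : P → Fin (n - 2) → ℂ)
    (hspan : Submodule.span ℂ (Set.range (gLift n y (0 : P → ℂ)))
      = LinearMap.ker
          (LinearMap.proj (R := ℂ) (φ := fun _ : Fin n => ℂ) ⟨n - 1, by omega⟩))
    (C : Finset (Fin n → P)) :
    (∃ W : Submodule ℂ (P → ℂ),
        (W : Set (P → ℂ)) = Degenerate n P y ∧
        Module.finrank ℂ W = n - 1 ∧
        (W : Set (P → ℂ)) ⊆ LinearMap.ker (liftMat n P y C).mulVecLin)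
    ∧ ((∃ z, z ∈ LinearMap.ker (liftMat n P y C).mulVecLin ∧
          z ∉ Degenerate n P y)
        ↔ n ≤ Module.finrank ℂ (LinearMap.ker (liftMat n P y C).mulVecLin))
    ∧ (n ≤ Module.finrank ℂ (LinearMap.ker (liftMat n P y C).mulVecLin)
        ↔ ∀ (f : Fin (Fintype.card P - n + 1) → {c // c ∈ C})
            (g : Fin (Fintype.card P - n + 1) → P),
            ((liftMat n P y C).submatrix f g).det = 0) := by
  set W := LinearMap.range (dualEvalFamily (K := ℂ) (gLift n y 0))
  have hW : (W : Set (P → ℂ)) = Degenerate n P y := (degenerate_eq_range hn y).symm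
  have hWdim : finrank ℂ W = n - 1 := finrank_range_dualEvalFamily_gLift hn y hspan
  have hWK : W ≤ LinearMap.ker (liftMat n P y C).mulVecLin :=
    fun z hz => degenerate_subset_ker_liftMat hn y C (hW.subset hz)
  refine ⟨⟨W, hW, hWdim, hWK⟩, ?_, ?_⟩
  · simp_rw [← hW, SetLike.mem_coe]
    rw [Submodule.exists_mem_notMem_iff_finrank_lt hWK, hWdim]
    omega
  · have hrank := LinearMap.finrank_range_add_finrank_ker (liftMat n P y C).mulVecLin
    rw [finrank_fintype_fun_eq_card, ← Matrix.rank] at hrank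
    rw [← rank_lt_iff_forall_det_submatrix_eq_zero]
    omega
end

section
/- Let 𝒫 be a finite set of size d and let ℳ be the uniform-matroid lifting matrix: rows indexed by all n-subsets of 𝒫 with the determinantal entries as above, evaluated at vectors {γ_p = (y_p,1,0) : p ∈ 𝒫} spanning the hyperplane x_n = 0 of ℂⁿ. If q = (0,…,0,1), then dim ker ℳ = n − 1; i.e., the only liftings z of the γ_p from q keeping every n of the lifted vectors dependent are the degenerate ones obtained by projecting onto a single hyperplane. -/
open scoped Classical

/-- The lifting matrix of the uniform matroid of rank `n-1`: one row for each
injective `n`-tuple of points (an `n`-circuit), with the signed minors as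
entries. -/
noncomputable def liftMatU (n : ℕ) (P : Type) [Fintype P] [DecidableEq P]
    (y : P → Fin (n - 2) → ℂ) :
    Matrix {c : Fin n → P // Function.Injective c} P ℂ := fun c p =>
  ∑ i : Fin n, if c.1 i = p then (-1 : ℂ) ^ (i : ℕ) * minorAux n y c.1 i else 0

/-!
Laplace expansion along the `z`-entries identifies the row of `ℳ z` indexed by `c` with
`± det` of the lifted vectors `(y_{c_i}, 1, z_{c_i})`, so `z ∈ ker ℳ` iff every `n` of the
lifted vectors are dependent. Then the lifted vectors span a space of dimension `≤ n - 1` that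
still projects onto `ℂ^{n-1}`; the projection is an isomorphism on it, so `z_p` is one fixed linear
functional of `(y_p, 1)`. Conversely such `z` lie in the kernel, which is therefore the image of
the matrix with rows `(y_p, 1)`, of rank `n - 1`.
-/

open Matrix Module Submodule Set Function

section Determinants

variable {R : Type*} [CommRing R]

theorem Matrix.det_of_snoc_eq_sum {m : ℕ} (u : Fin (m + 1) → Fin m → R) (z : Fin (m + 1) → R) :
    det (of fun i => (Fin.snoc (u i) (z i) : Fin (m + 1) → R)) =
      ∑ i : Fin (m + 1), (-1) ^ ((i : ℕ) + m) * z i * det (of fun j => u (i.succAbove j)) := by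
  rw [det_succ_column _ (Fin.last m)]
  refine Finset.sum_congr rfl fun i _ => ?_
  simp [submatrix, Fin.succAbove_last]

theorem Matrix.det_of_snoc_dotProduct_eq_zero [IsDomain R] {k : ℕ} (u : Fin (k + 1) → Fin k → R)
    (a : Fin k → R) : det (of fun i => (Fin.snoc (u i) (u i ⬝ᵥ a) : Fin (k + 1) → R)) = 0 := by
  rw [← exists_mulVec_eq_zero_iff]
  refine ⟨Fin.snoc a (-1), fun h => by simpa using congrFun h (Fin.last k), funext fun i => ?_⟩
  simp [mulVec, dotProduct, Fin.sum_univ_castSucc]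

end Determinants

section LinearAlgebra

variable {K : Type*} [Field K] {P : Type*}

theorem finrank_span_range_lt_of_forall_det_eq_zero [Finite P] {N : ℕ} (W : P → Fin N → K)
    (hW : ∀ c : Fin N → P, Injective c → det (of fun i => W (c i)) = 0) :
    finrank K (span K (range W)) < N := by
  by_contra! h
  obtain ⟨κ, a, ha, hspan, hli⟩ := exists_linearIndependent' K W
  have : Finite κ := Finite.of_injective a ha
  cases nonempty_fintype κ
  rw [← hspan, finrank_span_eq_card hli] at h
  obtain ⟨e⟩ : Nonempty (Fin N ↪ κ) := Function.Embedding.nonempty_of_card_le (by simpa using h)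
  refine (isUnit_iff_isUnit_det _).mp ?_ |>.ne_zero (hW (a ∘ e) (ha.comp e.injective))
  exact linearIndependent_rows_iff_isUnit.mp (hli.comp e e.injective)

theorem exists_dotProduct_eq_last_of_finrank_le {k : ℕ} (S : Submodule K (Fin (k + 1) → K))
    (hS : finrank K S ≤ k) (hmap : S.map (LinearMap.funLeft K K Fin.castSucc) = ⊤) :
    ∃ a : Fin k → K, ∀ w ∈ S, w (Fin.last k) = Fin.init w ⬝ᵥ a := by
  set f := LinearMap.funLeft K K Fin.castSucc ∘ₗ S.subtype
  have hsurj : Surjective f := by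
    rw [← LinearMap.range_eq_top, LinearMap.range_comp, range_subtype, hmap]
  have hinj : Injective f := by
    refine (LinearMap.injective_iff_surjective_of_finrank_eq_finrank ?_).mpr hsurj
    have := LinearMap.finrank_le_finrank_of_surjective hsurj
    simp only [finrank_fin_fun] at this ⊢
    omega
  set E := LinearEquiv.ofBijective f ⟨hinj, hsurj⟩
  set g := LinearMap.proj (Fin.last k) ∘ₗ S.subtype ∘ₗ E.symm.toLinearMap
  refine ⟨fun t => g (Pi.single t 1), fun w hw => ?_⟩
  have hE : E.symm (Fin.init w) = ⟨w, hw⟩ := E.symm_apply_eq.mpr rfl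
  calc w (Fin.last k) = g (Fin.init w) := by simp [g, hE]
    _ = Fin.init w ⬝ᵥ fun t => g (Pi.single t 1) := by
      conv_lhs => rw [pi_eq_sum_univ' (Fin.init w)]
      simp [dotProduct]

theorem mem_range_mulVecLin_iff_forall_det_snoc_eq_zero [Finite P] {k : ℕ} {v : P → Fin k → K}
    (hv : span K (range v) = ⊤) (z : P → K) :
    z ∈ LinearMap.range (of v).mulVecLin ↔
      ∀ c : Fin (k + 1) → P, Injective c →
        det (of fun i => (Fin.snoc (v (c i)) (z (c i)) : Fin (k + 1) → K)) = 0 := by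
  constructor
  · rintro ⟨a, rfl⟩ c -
    exact det_of_snoc_dotProduct_eq_zero (fun i => v (c i)) a
  · intro h
    set W : P → Fin (k + 1) → K := fun p => Fin.snoc (v p) (z p)
    have hmap : (span K (range W)).map (LinearMap.funLeft K K Fin.castSucc) = ⊤ := by
      have hinit : LinearMap.funLeft K K Fin.castSucc ∘ W = v :=
        funext fun p => Fin.snoc_comp_castSucc
      rw [Submodule.map_span, ← range_comp, hinit, hv]
    obtain ⟨a, ha⟩ := exists_dotProduct_eq_last_of_finrank_le _
      (Nat.lt_succ_iff.mp (finrank_span_range_lt_of_forall_det_eq_zero W h)) hmap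
    refine ⟨a, funext fun p => ?_⟩
    simpa [W, mulVec] using (ha (W p) (subset_span ⟨p, rfl⟩)).symm

end LinearAlgebra

theorem minorAux_eq_det {P : Type} (m : ℕ) (y : P → Fin m → ℂ) (c : Fin (m + 2) → P)
    (i : Fin (m + 2)) :
    minorAux (m + 2) y c i =
      det (of fun j => (Fin.snoc (y (c (i.succAbove j))) 1 : Fin (m + 1) → ℂ)) := by
  rw [minorAux, ← det_transpose]
  -- `embAux (m + 2) i` is definitionally `i.succAbove`, and `Fin.snoc x 1` the `dite` in `minorAux`
  rfl

theorem liftMatU_mulVec_apply {P : Type} [Fintype P] [DecidableEq P] (m : ℕ)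
    (y : P → Fin m → ℂ) (z : P → ℂ) (c : {c : Fin (m + 2) → P // Injective c}) :
    (liftMatU (m + 2) P y *ᵥ z) c =
      (-1) ^ (m + 1) * det (of fun i =>
        (Fin.snoc (Fin.snoc (y (c.1 i)) 1 : Fin (m + 1) → ℂ) (z (c.1 i)) : Fin (m + 2) → ℂ)) := by
  have hrow : (liftMatU (m + 2) P y *ᵥ z) c =
      ∑ i : Fin (m + 2), (-1) ^ (i : ℕ) * minorAux (m + 2) y c.1 i * z (c.1 i) := by
    simp only [mulVec, dotProduct, liftMatU, Finset.sum_mul, ite_mul, zero_mul]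
    rw [Finset.sum_comm]
    simp
  rw [hrow, det_of_snoc_eq_sum, Finset.mul_sum]
  refine Finset.sum_congr rfl fun i _ => ?_
  have hsign : (-1 : ℂ) ^ (m + 1) * (-1) ^ ((i : ℕ) + (m + 1)) = (-1) ^ (i : ℕ) := by
    rw [pow_add _ (i : ℕ), mul_left_comm, ← mul_pow, neg_one_mul, neg_neg, one_pow, mul_one]
  rw [minorAux_eq_det, ← hsign]
  ring

/-- for the uniform matroid of rank `n-1`, if the vectors
`(y_p, 1) ∈ ℂ^{n-1}` span `ℂ^{n-1}`, the kernel of the lifting matrix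
(with respect to `q = (0,…,0,1)`) has dimension exactly `n - 1`. -/
theorem stmt_17 (n : ℕ) (hn : 2 ≤ n) (P : Type) [Fintype P] [DecidableEq P]
    (y : P → Fin (n - 2) → ℂ)
    (hspan : Submodule.span ℂ (Set.range fun p =>
        (fun t : Fin (n - 1) => if h : (t : ℕ) < n - 2 then y p ⟨t, h⟩ else 1))
      = ⊤) :
    Module.finrank ℂ (LinearMap.ker (liftMatU n P y).mulVecLin) = n - 1 := by
  obtain ⟨m, rfl⟩ : ∃ m, n = m + 2 := ⟨n - 2, by omega⟩
  set v : P → Fin (m + 1) → ℂ := fun p => Fin.snoc (y p) 1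
  -- `Fin.snoc (y p) 1` unfolds to the `dite` in `hspan`
  have hv : span ℂ (range v) = ⊤ := hspan
  have hker :
      LinearMap.ker (liftMatU (m + 2) P y).mulVecLin = LinearMap.range (of v).mulVecLin := by
    ext z
    simp [mem_range_mulVecLin_iff_forall_det_snoc_eq_zero hv, funext_iff, liftMatU_mulVec_apply, v]
  rw [hker, ← Matrix.rank, rank_eq_finrank_span_row,
    show Set.range (of v).row = range v from rfl, hv, finrank_top, finrank_fin_fun]
  rfl
end
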